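/- Let A and B be closed subsets of a complete metric space X and let x̄ ∈ A ∩ B. Then A and B are subtransversal at x̄ if and only if there exist δ > 0 and κ > 0 such that for all x ∈ A ∩ B_δ(x̄) and y ∈ B ∩ B_δ(x̄) with x ≠ y, the nonlocal slope of the coupling function satisfies |∇φ|◇(x, y) = sup_{(u,v) ≠ (x,y)} max{φ(x,y) − φ(u,v), 0} / d((x,y),(u,v)) ≥ κ. -/

import Mathlib

open Metric Set
open scoped ENNReal

/-- Subtransversality of closed sets `A`, `B` at a point `x0 ∈ A ∩ B`. -/
def Subtrans {X : Type*} [MetricSpace X] (A B : Set X) (x0 : X) : Prop :=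
  ∃ K > 0, ∃ δ > 0, ∀ x ∈ Metric.ball x0 δ,
    EMetric.infEdist x (A ∩ B) ≤
      ENNReal.ofReal K * (EMetric.infEdist x A + EMetric.infEdist x B)

/-- `setInd S x` is `0` if `x ∈ S` and `+∞` otherwise (indicator in `ℝ≥0∞`). -/
noncomputable def setInd {X : Type*} (S : Set X) (x : X) : ℝ≥0∞ :=
  ⨅ (_ : x ∈ S), 0

/-- The coupling function `φ(x,y) = δ_A(x) + d(x,y) + δ_B(y)` of the sets `A` and `B`. -/
noncomputable def coupling {X : Type*} [MetricSpace X] (A B : Set X) (p : X × X) : ℝ≥0∞ :=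
  setInd A p.1 + ENNReal.ofReal (dist p.1 p.2) + setInd B p.2

/-- The nonlocal slope `|∇φ|◇(x,y)` of the coupling function of `A` and `B`,
with `X × X` carrying the sum metric. -/
noncomputable def couplingNLSlope {X : Type*} [MetricSpace X] (A B : Set X) (x y : X) : ℝ≥0∞ :=
  ⨆ (p : X × X) (_ : p ≠ (x, y)),
    (coupling A B (x, y) - coupling A B p) / ENNReal.ofReal (dist x p.1 + dist y p.2)

/-- The (local) slope `|∇φ|(x,y)` of the coupling function of `A` and `B`,
with `X × X` carrying the sum metric. -/
noncomputable def couplingSlope {X : Type*} [MetricSpace X] (A B : Set X) (x y : X) : ℝ≥0∞ :=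
  Filter.limsup
    (fun p : X × X =>
      (coupling A B (x, y) - coupling A B p) / ENNReal.ofReal (dist x p.1 + dist y p.2))
    (nhdsWithin (x, y) {q | q ≠ (x, y)})

/-!
If `A` and `B` are subtransversal, then for `x ∈ A`, `y ∈ B` near `x̄` there is `w ∈ A ∩ B` with
`d(x, w) = O(d(x, y))`; moving `(x, y)` to `(w, w)` lowers `φ` from `d(x, y)` to `0`, so the
nonlocal slope is bounded below. Conversely, given `x`, start from near-projections `a₀ ∈ A`,
`b₀ ∈ B` of `x` and apply Ekeland's principle to `(u, v) ↦ d(u, v)` on `A × B` with constant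
`c < κ`: it yields a nearby pair `(a, b)` at which the nonlocal slope of `φ` is at most `c`, so the
slope condition forces `a = b ∈ A ∩ B`, and the Ekeland displacement bound controls `d(x, a)` by
`d(x, A) + d(x, B)`.
-/

section Ekeland

variable {Y : Type*} [MetricSpace Y] {f : Y → ℝ} {c : ℝ}

lemma add_dist_le_trans (hc : 0 ≤ c) {x y w : Y} (hyw : f w + c * dist y w ≤ f y)
    (hxy : f y + c * dist x y ≤ f x) : f w + c * dist x w ≤ f x := by
  nlinarith [dist_triangle x y w]

lemma LowerSemicontinuous.isClosed_setOf_add_dist_le (hf : LowerSemicontinuous f) (x : Y) :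
    IsClosed {w | f w + c * dist x w ≤ f x} := by
  have hg : LowerSemicontinuous fun w => f w + c * dist x w :=
    hf.add (continuous_const.mul (continuous_const.dist continuous_id)).lowerSemicontinuous
  exact hg.isClosed_preimage (f x)

/-- Take `y` minimising `f` up to `c * ε` over the region cut out by `x`; the region cut out by
`y` lies inside it, so has radius less than `ε` around `y`. -/
lemma exists_add_dist_le_forall_dist_lt (hbdd : BddBelow (range f)) (hc : 0 < c) (x : Y)
    {ε : ℝ} (hε : 0 < ε) :
    ∃ y, f y + c * dist x y ≤ f x ∧ ∀ w, f w + c * dist y w ≤ f y → dist y w < ε := by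
  set T := f '' {w | f w + c * dist x w ≤ f x}
  have hT : BddBelow T := hbdd.mono (image_subset_range _ _)
  have hTne : T.Nonempty := ⟨f x, x, by simp, rfl⟩
  obtain ⟨_, ⟨y, hxy, rfl⟩, hy⟩ := (csInf_lt_iff hT hTne).1
    (lt_add_of_pos_right (sInf T) (mul_pos hc hε))
  refine ⟨y, hxy, fun w hyw => ?_⟩
  have hw : sInf T ≤ f w := csInf_le hT ⟨w, add_dist_le_trans hc.le hyw hxy, rfl⟩
  nlinarith

theorem LowerSemicontinuous.exists_ekeland [CompleteSpace Y] (hf : LowerSemicontinuous f)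
    (hbdd : BddBelow (range f)) (hc : 0 < c) (x₀ : Y) :
    ∃ z, f z + c * dist x₀ z ≤ f x₀ ∧ ∀ w, w ≠ z → f z < f w + c * dist z w := by
  choose! next hnext hsmall using fun (n : ℕ) x =>
    exists_add_dist_le_forall_dist_lt hbdd hc x (Nat.one_div_pos_of_nat (n := n))
  let z : ℕ → Y := fun n => Nat.rec x₀ (fun k p => next k p) n
  let y : ℕ → Y := fun n => z (n + 1)
  have hstep : ∀ n, f (y (n + 1)) + c * dist (y n) (y (n + 1)) ≤ f (y n) :=
    fun n => hnext (n + 1) (y n)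
  have hradius : ∀ n w, f w + c * dist (y n) w ≤ f (y n) → dist (y n) w < 1 / (n + 1) :=
    fun n => hsmall n (z n)
  have hmono : ∀ n m, n ≤ m → f (y m) + c * dist (y n) (y m) ≤ f (y n) := by
    intro n m hnm
    induction m, hnm using Nat.le_induction with
    | base => simp
    | succ m _ ih => exact add_dist_le_trans hc.le (hstep m) ih
  have hcauchy : CauchySeq y := by
    refine Metric.cauchySeq_iff'.2 fun ε hε => ?_
    obtain ⟨N, hN⟩ := exists_nat_one_div_lt hε
    exact ⟨N, fun n hn => by
      rw [dist_comm]; exact (hradius N _ (hmono N n hn)).trans hN⟩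
  obtain ⟨p, hp⟩ := cauchySeq_tendsto_of_complete hcauchy
  have hyp : ∀ n, f p + c * dist (y n) p ≤ f (y n) := fun n =>
    (hf.isClosed_setOf_add_dist_le (y n)).mem_of_tendsto hp
      (Filter.eventually_atTop.2 ⟨n, hmono n⟩)
  refine ⟨p, add_dist_le_trans hc.le (hyp 0) (hnext 0 x₀), fun w hwp => ?_⟩
  by_contra! hpw
  have hw : Filter.Tendsto y Filter.atTop (nhds w) :=
    tendsto_iff_dist_tendsto_zero.2 <| squeeze_zero (fun _ => dist_nonneg)
      (fun n => (hradius n w (add_dist_le_trans hc.le hpw (hyp n))).le)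
      tendsto_one_div_add_atTop_nhds_zero_nat
  exact hwp (tendsto_nhds_unique hw hp)

end Ekeland

lemma setInd_of_mem {X : Type*} {S : Set X} {x : X} (h : x ∈ S) : setInd S x = 0 := by
  simp [setInd, h]

lemma setInd_of_notMem {X : Type*} {S : Set X} {x : X} (h : x ∉ S) : setInd S x = ⊤ := by
  simp [setInd, h]

section Coupling

variable {X : Type*} [MetricSpace X] {A B : Set X}

lemma coupling_of_mem {x y : X} (hx : x ∈ A) (hy : y ∈ B) :
    coupling A B (x, y) = ENNReal.ofReal (dist x y) := by
  simp [coupling, setInd_of_mem hx, setInd_of_mem hy]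

lemma coupling_of_notMem {p : X × X} (h : ¬(p.1 ∈ A ∧ p.2 ∈ B)) : coupling A B p = ⊤ := by
  by_cases h1 : p.1 ∈ A
  · simp [coupling, setInd_of_notMem fun h2 => h ⟨h1, h2⟩]
  · simp [coupling, setInd_of_notMem h1]

lemma ofReal_le_couplingNLSlope {x y u v : X} (hx : x ∈ A) (hy : y ∈ B) (hu : u ∈ A)
    (hv : v ∈ B) (huv : (u, v) ≠ (x, y)) :
    ENNReal.ofReal ((dist x y - dist u v) / (dist x u + dist y v)) ≤ couplingNLSlope A B x y := by
  have hpos : 0 < dist x u + dist y v := by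
    have h := dist_pos.2 huv
    rw [Prod.dist_eq, dist_comm u, dist_comm v] at h
    exact h.trans_le (max_le_add_of_nonneg dist_nonneg dist_nonneg)
  refine le_iSup₂_of_le (u, v) huv (le_of_eq ?_)
  rw [coupling_of_mem hx hy, coupling_of_mem hu hv, ← ENNReal.ofReal_sub _ dist_nonneg,
    ENNReal.ofReal_div_of_pos hpos]

lemma couplingNLSlope_le_of_forall_dist_le {a b : X} {c : ℝ} (hc : 0 ≤ c) (ha : a ∈ A)
    (hb : b ∈ B)
    (hmin : ∀ u ∈ A, ∀ v ∈ B, dist a b ≤ dist u v + c * (dist a u + dist b v)) :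
    couplingNLSlope A B a b ≤ ENNReal.ofReal c := by
  refine iSup₂_le fun p _ => ?_
  by_cases hp : p.1 ∈ A ∧ p.2 ∈ B
  · refine ENNReal.div_le_of_le_mul ?_
    rw [coupling_of_mem ha hb, coupling_of_mem hp.1 hp.2, ← ENNReal.ofReal_sub _ dist_nonneg,
      ← ENNReal.ofReal_mul hc]
    exact ENNReal.ofReal_le_ofReal (by linarith [hmin p.1 hp.1 p.2 hp.2])
  · simp [coupling_of_notMem hp]

end Coupling

section Subtransversality

variable {X : Type*} [MetricSpace X] {A B : Set X}

/-- Ekeland's principle for `(u, v) ↦ dist u v` on `A × B`, run in the max metric of `X × X`;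
minimality then also holds for the larger sum metric. -/
lemma exists_ekeland_pair_dist [CompleteSpace X] (hA : IsClosed A) (hB : IsClosed B)
    {c : ℝ} (hc : 0 < c) {a₀ b₀ : X} (ha₀ : a₀ ∈ A) (hb₀ : b₀ ∈ B) :
    ∃ a ∈ A, ∃ b ∈ B, c * max (dist a₀ a) (dist b₀ b) ≤ dist a₀ b₀ ∧
      ∀ u ∈ A, ∀ v ∈ B, dist a b ≤ dist u v + c * (dist a u + dist b v) := by
  have : CompleteSpace ↥(A ×ˢ B) := (hA.prod hB).completeSpace_coe
  let f : ↥(A ×ˢ B) → ℝ := fun p => dist p.1.1 p.1.2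
  have hf : LowerSemicontinuous f :=
    (continuous_subtype_val.fst.dist continuous_subtype_val.snd).lowerSemicontinuous
  obtain ⟨⟨⟨a, b⟩, ha, hb⟩, hz₀, hz⟩ :=
    hf.exists_ekeland ⟨0, forall_mem_range.2 fun _ => dist_nonneg⟩ hc ⟨(a₀, b₀), ha₀, hb₀⟩
  refine ⟨a, ha, b, hb, ?_, fun u hu v hv => ?_⟩
  · have := dist_nonneg (x := a) (y := b)
    simp only [f, Subtype.dist_eq, Prod.dist_eq] at hz₀
    linarith
  · have hle : dist a b ≤ dist u v + c * max (dist a u) (dist b v) := by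
      rcases eq_or_ne (⟨(u, v), hu, hv⟩ : ↥(A ×ˢ B)) ⟨(a, b), ha, hb⟩ with h | h
      · obtain ⟨rfl, rfl⟩ := Prod.mk.inj (congrArg Subtype.val h)
        simp
      · simpa [f, Subtype.dist_eq, Prod.dist_eq] using (hz _ h).le
    have := max_le_add_of_nonneg (dist_nonneg (x := a) (y := u)) (dist_nonneg (x := b) (y := v))
    nlinarith

lemma subtrans_iff_infDist (hne : (A ∩ B).Nonempty) {x₀ : X} :
    Subtrans A B x₀ ↔ ∃ K > 0, ∃ δ > 0, ∀ x ∈ ball x₀ δ,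
      infDist x (A ∩ B) ≤ K * (infDist x A + infDist x B) := by
  have hofReal : ∀ {S : Set X}, S.Nonempty → ∀ x,
      EMetric.infEdist x S = ENNReal.ofReal (infDist x S) :=
    fun hS x => (ENNReal.ofReal_toReal (infEDist_ne_top hS)).symm
  refine exists_congr fun K => and_congr_right fun hK => exists_congr fun δ =>
    and_congr_right fun _ => forall₂_congr fun x _ => ?_
  rw [hofReal hne, hofReal (hne.mono inter_subset_left), hofReal (hne.mono inter_subset_right),
    ← ENNReal.ofReal_add infDist_nonneg infDist_nonneg, ← ENNReal.ofReal_mul hK.le,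
    ENNReal.ofReal_le_ofReal_iff (mul_nonneg hK.le (add_nonneg infDist_nonneg infDist_nonneg))]

lemma exists_mem_dist_le_two_mul_infDist (hA : IsClosed A) (hne : A.Nonempty) (x : X) :
    ∃ a ∈ A, dist x a ≤ 2 * infDist x A := by
  rcases (infDist_nonneg (x := x) (s := A)).eq_or_lt with h | h
  · exact ⟨x, (hA.mem_iff_infDist_zero hne).2 h.symm, by simp [← h]⟩
  · obtain ⟨a, ha, hxa⟩ := (infDist_lt_iff hne).1 (by linarith : infDist x A < 2 * infDist x A)
    exact ⟨a, ha, hxa.le⟩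

lemma infDist_inter_le_of_diagonal_minimizers [CompleteSpace X] (hA : IsClosed A)
    (hB : IsClosed B) {x₀ : X} (hx₀ : x₀ ∈ A ∩ B) {c δ : ℝ} (hc : 0 < c)
    (hdiag : ∀ a ∈ A ∩ ball x₀ δ, ∀ b ∈ B ∩ ball x₀ δ,
      (∀ u ∈ A, ∀ v ∈ B, dist a b ≤ dist u v + c * (dist a u + dist b v)) → a = b)
    {x : X} (hx : (3 + 4 / c) * dist x x₀ < δ) :
    infDist x (A ∩ B) ≤ (2 + 2 / c) * (infDist x A + infDist x B) := by
  set r := infDist x A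
  set s := infDist x B
  have hr₀ : 0 ≤ r := infDist_nonneg
  have hs₀ : 0 ≤ s := infDist_nonneg
  have hr : r ≤ dist x x₀ := infDist_le_dist_of_mem hx₀.1
  have hs : s ≤ dist x x₀ := infDist_le_dist_of_mem hx₀.2
  obtain ⟨a₀, ha₀, hxa₀⟩ := exists_mem_dist_le_two_mul_infDist hA ⟨x₀, hx₀.1⟩ x
  obtain ⟨b₀, hb₀, hxb₀⟩ := exists_mem_dist_le_two_mul_infDist hB ⟨x₀, hx₀.2⟩ x
  have hab₀ : dist a₀ b₀ ≤ 2 * (r + s) := by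
    linarith [dist_triangle_left a₀ b₀ x]
  obtain ⟨a, ha, b, hb, hmove, hmin⟩ := exists_ekeland_pair_dist hA hB hc ha₀ hb₀
  have hmove' : ∀ {p₀ p : X}, c * dist p₀ p ≤ dist a₀ b₀ → dist p₀ p ≤ 2 * (r + s) / c :=
    fun h => by rw [le_div_iff₀' hc]; linarith
  have ha₀a := hmove' ((mul_le_mul_of_nonneg_left (le_max_left _ _) hc.le).trans hmove)
  have hb₀b := hmove' ((mul_le_mul_of_nonneg_left (le_max_right _ _) hc.le).trans hmove)
  have hball : ∀ {p₀ p : X}, dist x p₀ ≤ 2 * dist x x₀ → dist p₀ p ≤ 2 * (r + s) / c →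
      p ∈ ball x₀ δ := by
    intro p₀ p hxp₀ hp₀p
    have : 2 * (r + s) / c ≤ 4 / c * dist x x₀ := by
      rw [div_mul_eq_mul_div]; exact div_le_div_of_nonneg_right (by linarith) hc.le
    rw [mem_ball]
    linarith [dist_triangle4 p p₀ x x₀, dist_comm p p₀, dist_comm p₀ x]
  have hab : a = b :=
    hdiag a ⟨ha, hball (by linarith) ha₀a⟩ b ⟨hb, hball (by linarith) hb₀b⟩ hmin
  calc infDist x (A ∩ B) ≤ dist x a := infDist_le_dist_of_mem ⟨ha, hab ▸ hb⟩
    _ ≤ dist x a₀ + dist a₀ a := dist_triangle _ _ _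
    _ ≤ 2 * r + 2 * (r + s) / c := by linarith
    _ ≤ (2 + 2 / c) * (r + s) := by
      rw [add_mul, div_mul_eq_mul_div]; gcongr; linarith

lemma ofReal_le_couplingNLSlope_of_infDist_le (hne : (A ∩ B).Nonempty) {K : ℝ} (hK : 0 ≤ K)
    {x y : X} (hx : x ∈ A) (hy : y ∈ B) (hxy : x ≠ y) (h : infDist x (A ∩ B) ≤ K * dist x y) :
    ENNReal.ofReal (1 / (2 * K + 3)) ≤ couplingNLSlope A B x y := by
  have hd : 0 < dist x y := dist_pos.2 hxy
  obtain ⟨w, hw, hxw⟩ := (infDist_lt_iff hne).1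
    (h.trans_lt (by nlinarith : K * dist x y < (K + 1) * dist x y))
  refine (ENNReal.ofReal_le_ofReal ?_).trans
    (ofReal_le_couplingNLSlope hx hy hw.1 hw.2 fun h => hxy ?_)
  · have hS₀ : 0 < dist x w + dist y w := hd.trans_le (dist_triangle_right x y w)
    have hS : dist x w + dist y w ≤ (2 * K + 3) * dist x y := by
      linarith [dist_triangle_left y w x]
    rw [dist_self, sub_zero, div_le_div_iff₀ (by positivity) hS₀]
    linarith
  · exact (Prod.mk.inj h).1.symm.trans (Prod.mk.inj h).2

end Subtransversality

theorem stmt4 {X : Type*} [MetricSpace X] [CompleteSpace X]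
    {A B : Set X} (hA : IsClosed A) (hB : IsClosed B) {xbar : X} (hx : xbar ∈ A ∩ B) :
    Subtrans A B xbar ↔
      ∃ δ > 0, ∃ κ > 0, ∀ x ∈ A ∩ Metric.ball xbar δ, ∀ y ∈ B ∩ Metric.ball xbar δ,
        x ≠ y → ENNReal.ofReal κ ≤ couplingNLSlope A B x y := by
  have hne : (A ∩ B).Nonempty := ⟨xbar, hx⟩
  rw [subtrans_iff_infDist hne]
  constructor
  · rintro ⟨K, hK, δ, hδ, hsub⟩
    refine ⟨δ, hδ, 1 / (2 * K + 3), by positivity, fun x ⟨hxA, hxδ⟩ y ⟨hyB, _⟩ hxy =>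
      ofReal_le_couplingNLSlope_of_infDist_le hne hK.le hxA hyB hxy ?_⟩
    calc infDist x (A ∩ B) ≤ K * (infDist x A + infDist x B) := hsub x hxδ
      _ ≤ K * dist x y := by
        rw [infDist_zero_of_mem hxA, zero_add]
        exact mul_le_mul_of_nonneg_left (infDist_le_dist_of_mem hyB) hK.le
  · rintro ⟨δ, hδ, κ, hκ, hslope⟩
    obtain ⟨c, hc, hcκ⟩ : ∃ c, 0 < c ∧ c < κ := ⟨κ / 2, by positivity, by linarith⟩
    have hdiag : ∀ a ∈ A ∩ ball xbar δ, ∀ b ∈ B ∩ ball xbar δ,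
        (∀ u ∈ A, ∀ v ∈ B, dist a b ≤ dist u v + c * (dist a u + dist b v)) → a = b := by
      intro a ha b hb hmin
      by_contra hab
      have := (hslope a ha b hb hab).trans
        (couplingNLSlope_le_of_forall_dist_le hc.le ha.1 hb.1 hmin)
      linarith [(ENNReal.ofReal_le_ofReal_iff hc.le).1 this]
    refine ⟨2 + 2 / c, by positivity, δ / (3 + 4 / c), by positivity, fun x hxδ =>
      infDist_inter_le_of_diagonal_minimizers hA hB hx hc hdiag ?_⟩
    rwa [mem_ball, lt_div_iff₀' (by positivity)] at hxδ
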